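/- arXiv:2108.11816 — 3 statements merged into one kernel-verified Lean document; each statement's English description precedes it below -/
import Mathlib

section
/- For every multigraph G, every valid pair of functions (g,h), and every integer k ≥ 1, we have χ'_{(g,h)}(G) ≤ k if and only if G is (k·g, k·h)-orientable. -/
/-!
Combining orientations of the color classes of a `(g,h)`-oriented-coloring with `k` colors gives a
`(k·g, k·h)`-orientation. Conversely, given a `(k·g, k·h)`-orientation, cut the out-edges at each
vertex `v` into blocks of at most `k` edges, at most `h v` blocks, and the in-edges into at most
`g v` such blocks. The blocks are the vertices of a bipartite multigraph of maximum degree `k`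
(an edge joins its out-block to its in-block), so by Kőnig's theorem its edges split into `k`
matchings. In each matching `v` has at most one out-edge per out-block and one in-edge per in-block.
Kőnig's theorem is proved by padding to a `k`-regular bipartite multigraph and removing perfect
matchings, which exist by Hall's theorem.
-/

open Classical

noncomputable section

namespace MG

variable {V : Type} {E : Type} [Fintype V] [Fintype E] [DecidableEq V]

/-- The number of times vertex `v` occurs as an endpoint of the unordered pair `s`
(so a loop at `v` counts twice). -/
def mult (v : V) (s : Sym2 V) : ℕ :=
  Sym2.lift ⟨fun a b => (if a = v then 1 else 0) + (if b = v then 1 else 0),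
    fun _ _ => add_comm _ _⟩ s

/-- The degree of a vertex in the multigraph whose edges `E` have endpoints given
by `ends` (loops count twice). -/
def degree (ends : E → Sym2 V) (v : V) : ℕ := ∑ e : E, mult v (ends e)

/-- Maximum degree `Δ(G)`. -/
def maxDegree (ends : E → Sym2 V) : ℕ := Finset.univ.sup fun v => degree ends v

/-- `e(S)`: the number of edges with all endpoints in `S`. -/
def edgesWithin (ends : E → Sym2 V) (S : Finset V) : ℕ :=
  (Finset.univ.filter fun e => ∀ v ∈ ends e, v ∈ S).card

/-- The degree of `v` in the subgraph induced by `S`. -/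
def degreeIn (ends : E → Sym2 V) (S : Finset V) (v : V) : ℕ :=
  ∑ e ∈ Finset.univ.filter (fun e => ∀ u ∈ ends e, u ∈ S), mult v (ends e)

/-- Adjacency; a vertex with a loop is adjacent to itself. -/
def Adj (ends : E → Sym2 V) (u v : V) : Prop := ∃ e, ends e = s(u, v)

/-- The multigraph has no loops. -/
def Loopless (ends : E → Sym2 V) : Prop := ∀ e, ¬ (ends e).IsDiag

/-- Reachability by walks. -/
def Reaches (ends : E → Sym2 V) (u v : V) : Prop :=
  Relation.ReflTransGen (Adj ends) u v

/-- The connected component of `v`, as a set of vertices. -/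
def component (ends : E → Sym2 V) (v : V) : Finset V :=
  Finset.univ.filter fun u => Reaches ends v u

/-- A pseudoforest: every connected component contains at most one cycle
(a loop counts as a cycle); equivalently, every connected component has at
most as many edges as vertices. -/
def IsPseudoforest (ends : E → Sym2 V) : Prop :=
  ∀ v : V, edgesWithin ends (component ends v) ≤ (component ends v).card

/-- A forest (acyclic multigraph): every connected component has strictly fewer
edges than vertices. -/
def IsForest (ends : E → Sym2 V) : Prop :=
  ∀ v : V, edgesWithin ends (component ends v) + 1 ≤ (component ends v).card

/-- An orientation assigns to each edge an ordered pair of its endpoints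
(tail, head). -/
def IsOrientation (ends : E → Sym2 V) (D : E → V × V) : Prop :=
  ∀ e, Sym2.mk (D e).1 (D e).2 = ends e

/-- Indegree of `v` under the orientation `D`. -/
def inDeg (D : E → V × V) (v : V) : ℕ := (Finset.univ.filter fun e => (D e).2 = v).card

/-- Outdegree of `v` under the orientation `D`. -/
def outDeg (D : E → V × V) (v : V) : ℕ := (Finset.univ.filter fun e => (D e).1 = v).card

/-- `G` is `(g,h)`-orientable: there is an orientation in which every vertex `v`
has indegree at most `g v` and outdegree at most `h v`. -/
def GHOrientable (ends : E → Sym2 V) (g h : V → ℕ∞) : Prop :=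
  ∃ D : E → V × V, IsOrientation ends D ∧
    (∀ v, (inDeg D v : ℕ∞) ≤ g v) ∧ (∀ v, (outDeg D v : ℕ∞) ≤ h v)

/-- `(g,h)` is a valid pair of functions for `G`. -/
def ValidPair (ends : E → Sym2 V) (g h : V → ℕ∞) : Prop :=
  (∀ v : V, 1 ≤ g v + h v) ∧
  (∀ u v : V, Adj ends u v → 1 ≤ g u + g v) ∧
  (∀ u v : V, Adj ends u v → 1 ≤ h u + h v)

/-- The endpoint map of the subgraph consisting of the edges satisfying `P`. -/
def subEnds (ends : E → Sym2 V) (P : E → Prop) : {e // P e} → Sym2 V :=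
  fun e => ends e.val

/-- A `(g,h)`-oriented-coloring: each color class is a `(g,h)`-orientable subgraph. -/
def GHColoring (ends : E → Sym2 V) (g h : V → ℕ∞) {k : ℕ} (C : E → Fin k) : Prop :=
  ∀ c : Fin k, GHOrientable (subEnds ends fun e => C e = c) g h

/-- The `(g,h)`-oriented chromatic index `χ'_{(g,h)}(G)`. -/
def ghChromaticIndex (ends : E → Sym2 V) (g h : V → ℕ∞) : ℕ :=
  sInf {k | ∃ C : E → Fin k, GHColoring ends g h C}

/-- Ceiling division `⌈a/b⌉` on ℕ. -/
def cdiv (a b : ℕ) : ℕ := (a + b - 1) / b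

/-- Replace `∞` values of `g` by the maximum degree `Δ(G)`. -/
def trunc (ends : E → Sym2 V) (g : V → ℕ∞) (v : V) : ℕ :=
  WithTop.untopD (maxDegree ends) (g v)

/-- The weighted maximum degree `Δ_{(g,h)}(G) = max_v ⌈d(v)/(g(v)+h(v))⌉`
(values `∞` of `g, h` replaced by `Δ(G)`). -/
def ghMaxDegree (ends : E → Sym2 V) (g h : V → ℕ∞) : ℕ :=
  Finset.univ.sup fun v => cdiv (degree ends v) (trunc ends g v + trunc ends h v)

/-- The weighted maximum density
`W_{(g,h)}(G) = max_{S, g(S) ≥ 1, h(S) ≥ 1} ⌈e(S)/min{g(S),h(S)}⌉`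
(values `∞` of `g, h` replaced by `Δ(G)`). -/
def ghMaxDensity (ends : E → Sym2 V) (g h : V → ℕ∞) : ℕ :=
  (Finset.univ.filter fun S : Finset V =>
      (1 ≤ ∑ v ∈ S, g v) ∧ (1 ≤ ∑ v ∈ S, h v)).sup
    fun S => cdiv (edgesWithin ends S)
      (min (∑ v ∈ S, trunc ends g v) (∑ v ∈ S, trunc ends h v))

/-- An edge-coloring into pseudoforests. -/
def PaColoring (ends : E → Sym2 V) {k : ℕ} (C : E → Fin k) : Prop :=
  ∀ c : Fin k, IsPseudoforest (subEnds ends fun e => C e = c)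

/-- The pseudoarboricity `pa(G)`. -/
def pa (ends : E → Sym2 V) : ℕ := sInf {k | ∃ C : E → Fin k, PaColoring ends C}

/-- An edge-coloring into degree-`f` pseudoforests. -/
def PafColoring (ends : E → Sym2 V) (f : V → ℕ) {k : ℕ} (C : E → Fin k) : Prop :=
  ∀ c : Fin k, IsPseudoforest (subEnds ends fun e => C e = c) ∧
    ∀ v, degree (subEnds ends fun e => C e = c) v ≤ f v

/-- The degree-`f` pseudoarboricity `pa_f(G)`. -/
def paf (ends : E → Sym2 V) (f : V → ℕ) : ℕ :=
  sInf {k | ∃ C : E → Fin k, PafColoring ends f C}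

/-- The weighted maximum degree `Δ_f(G) = max_v ⌈d(v)/f(v)⌉`. -/
def fMaxDegree (ends : E → Sym2 V) (f : V → ℕ) : ℕ :=
  Finset.univ.sup fun v => cdiv (degree ends v) (f v)

/-- An edge-coloring into degree-`f` forests. -/
def AfColoring (ends : E → Sym2 V) (f : V → ℕ) {k : ℕ} (C : E → Fin k) : Prop :=
  ∀ c : Fin k, IsForest (subEnds ends fun e => C e = c) ∧
    ∀ v, degree (subEnds ends fun e => C e = c) v ≤ f v

/-- The degree-`f` arboricity `a_f(G)`. -/
def af (ends : E → Sym2 V) (f : V → ℕ) : ℕ :=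
  sInf {k | ∃ C : E → Fin k, AfColoring ends f C}

/-- The arboricity `a(G)`. -/
def arboricity (ends : E → Sym2 V) : ℕ :=
  sInf {k | ∃ C : E → Fin k, ∀ c : Fin k, IsForest (subEnds ends fun e => C e = c)}

/-- The linear arboricity `la(G)`: color classes are linear forests, i.e.
degree-2 forests. -/
def la (ends : E → Sym2 V) : ℕ := af ends fun _ => 2

/-- `G` is `k`-degenerate: every (induced, nonempty) subgraph has a vertex of
degree at most `k`. -/
def Degenerate (ends : E → Sym2 V) (k : ℕ) : Prop :=
  ∀ S : Finset V, S.Nonempty → ∃ v ∈ S, degreeIn ends S v ≤ k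

/-- An `f`-coloring: in each color class every vertex `v` has degree at most `f v`. -/
def FColoring (ends : E → Sym2 V) (f : V → ℕ) {k : ℕ} (C : E → Fin k) : Prop :=
  ∀ c : Fin k, ∀ v, degree (subEnds ends fun e => C e = c) v ≤ f v

/-- The `f`-chromatic index `χ'_f(G)`. -/
def fChromaticIndex (ends : E → Sym2 V) (f : V → ℕ) : ℕ :=
  sInf {k | ∃ C : E → Fin k, FColoring ends f C}

/-- `G` is bipartite: the vertices can be split into two sides so that every
edge has one endpoint on each side. -/
def Bipartite (ends : E → Sym2 V) : Prop :=
  ∃ P : V → Prop, ∀ e : E, ∃ u v, ends e = s(u, v) ∧ P u ∧ ¬ P v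

/-- The list analogue `χ'_{(g,h),ℓ}(G)`: the least `k` such that every list
assignment with lists of size at least `k` admits a coloring from the lists in
which each color class is `(g,h)`-orientable. -/
def ghListChromaticIndex (ends : E → Sym2 V) (g h : V → ℕ∞) : ℕ :=
  sInf {k | ∀ L : E → Finset ℕ, (∀ e, k ≤ (L e).card) →
    ∃ C : E → ℕ, (∀ e, C e ∈ L e) ∧
      ∀ c : ℕ, GHOrientable (subEnds ends fun e => C e = c) g h}

/-- The list degree-`f` pseudoarboricity `pa_{f,ℓ}(G)`. -/
def pafList (ends : E → Sym2 V) (f : V → ℕ) : ℕ :=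
  sInf {k | ∀ L : E → Finset ℕ, (∀ e, k ≤ (L e).card) →
    ∃ C : E → ℕ, (∀ e, C e ∈ L e) ∧
      ∀ c : ℕ, IsPseudoforest (subEnds ends fun e => C e = c) ∧
        ∀ v, degree (subEnds ends fun e => C e = c) v ≤ f v}

/-- The list `f`-chromatic index `χ'_{f,ℓ}(G)`. -/
def fListChromaticIndex (ends : E → Sym2 V) (f : V → ℕ) : ℕ :=
  sInf {k | ∀ L : E → Finset ℕ, (∀ e, k ≤ (L e).card) →
    ∃ C : E → ℕ, (∀ e, C e ∈ L e) ∧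
      ∀ c : ℕ, ∀ v, degree (subEnds ends fun e => C e = c) v ≤ f v}


end MG

open Finset

theorem Finset.card_filter_subtype_val {α : Type*} [Fintype α] {p q : α → Prop} [DecidablePred p]
    [DecidablePred q] : #{x : Subtype p | q x} = #{a | p a ∧ q a} := by
  rw [← card_map (Function.Embedding.subtype p)]
  congr 1
  ext a
  simp [and_comm]

theorem Finset.card_filter_sum_elim {α β W : Type*} [Fintype α] [Fintype β] [DecidableEq W]
    (f : α → W) (g : β → W) (w : W) :
    #{x | Sum.elim f g x = w} = #{a | f a = w} + #{b | g b = w} := by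
  rw [← card_disjSum, ← univ_disjSum_univ]
  congr 1
  ext (a | b) <;> simp

theorem Finset.card_filter_sigma_fst {W : Type*} [Fintype W] [DecidableEq W] (n : W → ℕ) (w : W) :
    #{x : Σ w, Fin (n w) | x.1 = w} = n w := by
  rw [← Fintype.card_subtype, Fintype.card_congr (Equiv.sigmaSubtype w), Fintype.card_fin]

section BipartiteEdgeColoring

variable {E W : Type*} [Fintype E] [DecidableEq W]

/-- Edge `e` of a bipartite multigraph on two copies of `W` joins the left copy of `t e` to the
right copy of `h e`. -/
def IsProperEdgeColoring {k : ℕ} (t h : E → W) (C : E → Fin k) : Prop :=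
  ∀ c, Set.InjOn t {e | C e = c} ∧ Set.InjOn h {e | C e = c}

theorem exists_perfectMatching_of_regular [Fintype W] (t h : E → W) {k : ℕ}
    (ht : ∀ w, #{e | t e = w} = k + 1) (hh : ∀ w, #{e | h e = w} = k + 1) :
    ∃ M : Finset E, (∀ w, #{e ∈ M | t e = w} = 1) ∧ ∀ w, #{e ∈ M | h e = w} = 1 := by
  let nbhd : W → Finset W := fun w => ({e | t e = w} : Finset E).image h
  have hall : ∀ T : Finset W, #T ≤ #(T.biUnion nbhd) := by
    intro T
    have hsub : ({e | t e ∈ T} : Finset E) ⊆ ({e | h e ∈ T.biUnion nbhd} : Finset E) := by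
      intro e he
      simp only [mem_filter, mem_univ, true_and] at he
      simp only [nbhd, mem_filter, mem_univ, mem_biUnion, mem_image, true_and]
      exact ⟨t e, he, e, rfl, rfl⟩
    have hcard := card_le_card hsub
    rw [← sum_card_fiberwise_eq_card_filter, ← sum_card_fiberwise_eq_card_filter,
      sum_congr rfl fun w _ => ht w, sum_congr rfl fun w _ => hh w, sum_const, sum_const,
      smul_eq_mul, smul_eq_mul] at hcard
    exact Nat.le_of_mul_le_mul_right hcard k.succ_pos
  obtain ⟨f, hf_inj, hf⟩ := (all_card_le_biUnion_card_iff_exists_injective nbhd).1 hall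
  have hf_surj : f.Surjective := Finite.injective_iff_surjective.1 hf_inj
  choose sel hsel_t hsel_h using fun w => (by simpa [nbhd] using hf w : ∃ e, t e = w ∧ h e = f w)
  refine ⟨univ.image sel, fun w => card_eq_one.2 ⟨sel w, ?_⟩, fun w => card_eq_one.2 ?_⟩
  · ext e
    simp only [mem_filter, mem_image, mem_univ, true_and, mem_singleton]
    constructor
    · rintro ⟨⟨w', rfl⟩, hw'⟩
      rw [← hw', hsel_t]
    · rintro rfl
      exact ⟨⟨w, rfl⟩, hsel_t w⟩
  · obtain ⟨w, rfl⟩ := hf_surj w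
    refine ⟨sel w, ?_⟩
    ext e
    simp only [mem_filter, mem_image, mem_univ, true_and, mem_singleton]
    constructor
    · rintro ⟨⟨w', rfl⟩, hw'⟩
      rw [hf_inj (show f w' = f w by rw [← hsel_h, hw'])]
    · rintro rfl
      exact ⟨⟨w, rfl⟩, hsel_h w⟩

theorem exists_properEdgeColoring_of_regular [Fintype W] {k : ℕ} (t h : E → W)
    (ht : ∀ w, #{e | t e = w} = k) (hh : ∀ w, #{e | h e = w} = k) :
    ∃ C : E → Fin k, IsProperEdgeColoring t h C := by
  induction k generalizing E with
  | zero => exact ⟨fun e => absurd (ht (t e)) (card_ne_zero.2 ⟨e, by simp⟩), fun c => c.elim0⟩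
  | succ k ih =>
    obtain ⟨M, hMt, hMh⟩ := exists_perfectMatching_of_regular t h ht hh
    have hrest : ∀ f : E → W, (∀ w, #{e | f e = w} = k + 1) → (∀ w, #{e ∈ M | f e = w} = 1) →
        ∀ w, #{x : {e // e ∉ M} | f x = w} = k := by
      intro f hf hfM w
      have hin : #{e | f e = w ∧ e ∈ M} = 1 := by
        rw [← hfM w]
        congr 1
        ext e
        simp [and_comm]
      have hsplit := card_filter_add_card_filter_not (s := {e | f e = w}) (· ∈ M)
      rw [filter_filter, filter_filter, hf, hin] at hsplit
      rw [card_filter_subtype_val (q := fun e => f e = w)]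
      simp_rw [and_comm (a := _ ∉ M)]
      omega
    obtain ⟨C', hC'⟩ := ih (fun x : {e // e ∉ M} => t x) (fun x => h x) (hrest t ht hMt)
      (hrest h hh hMh)
    let C : E → Fin (k + 1) := fun e => if he : e ∈ M then Fin.last k else (C' ⟨e, he⟩).castSucc
    have hproper : ∀ f : E → W, (∀ w, #{e ∈ M | f e = w} = 1) →
        (∀ c, Set.InjOn (fun x : {e // e ∉ M} => f x) {x | C' x = c}) →
        ∀ c, Set.InjOn f {e | C e = c} := by
      intro f hfM hfC' c e he e' he' hff
      obtain rfl : C e = c := he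
      by_cases hm : e ∈ M <;> by_cases hm' : e' ∈ M <;>
        simp [C, hm, hm', (Fin.castSucc_lt_last _).ne, (Fin.castSucc_lt_last _).ne'] at he'
      · exact card_le_one.1 (hfM (f e)).le e (by simp [hm]) e' (by simp [hm', hff])
      · exact congrArg Subtype.val (@hfC' _ ⟨e, hm⟩ rfl ⟨e', hm'⟩ he' hff)
    exact ⟨C, fun c =>
      ⟨hproper t hMt (fun c => (hC' c).1) c, hproper h hMh (fun c => (hC' c).2) c⟩⟩

theorem exists_properEdgeColoring_of_fintype [Fintype W] {k : ℕ} (t h : E → W)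
    (ht : ∀ w, #{e | t e = w} ≤ k) (hh : ∀ w, #{e | h e = w} ≤ k) :
    ∃ C : E → Fin k, IsProperEdgeColoring t h C := by
  have hdeficit : ∀ f : E → W, (∀ w, #{e | f e = w} ≤ k) →
      Fintype.card (Σ w, Fin (k - #{e | f e = w})) + Fintype.card E = Fintype.card W * k := by
    intro f hf
    rw [Fintype.card_sigma, ← card_univ (α := E),
      card_eq_sum_card_fiberwise (f := f) (t := univ) (fun _ _ => mem_univ _), ← sum_add_distrib]
    simp only [Fintype.card_fin]
    rw [sum_congr rfl fun w _ => Nat.sub_add_cancel (hf w), sum_const, card_univ, smul_eq_mul]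
  -- pad both sides up to degree `k` with new edges, matching the missing left ends to the
  -- missing right ends arbitrarily
  let ψ : (Σ w, Fin (k - #{e | t e = w})) ≃ Σ w, Fin (k - #{e | h e = w}) :=
    Fintype.equivOfCardEq (by have := hdeficit t ht; have := hdeficit h hh; omega)
  have hregular_t :
      ∀ w, #{x | Sum.elim t (fun a : Σ w, Fin (k - #{e | t e = w}) => a.1) x = w} = k := fun w => by
    rw [card_filter_sum_elim, card_filter_sigma_fst, Nat.add_sub_cancel' (ht w)]
  have hregular_h : ∀ w, #{x | Sum.elim h (fun a => (ψ a).1) x = w} = k := fun w => by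
    rw [card_filter_sum_elim, card_equiv ψ (t := {b | b.1 = w}) (by simp),
      card_filter_sigma_fst, Nat.add_sub_cancel' (hh w)]
  obtain ⟨C, hC⟩ := exists_properEdgeColoring_of_regular _ _ hregular_t hregular_h
  exact ⟨C ∘ Sum.inl, fun c => ⟨fun e he e' he' hte => Sum.inl_injective ((hC c).1 he he' hte),
    fun e he e' he' hhe => Sum.inl_injective ((hC c).2 he he' hhe)⟩⟩

/-- **Kőnig's edge coloring theorem** for bipartite multigraphs. -/
theorem exists_properEdgeColoring {k : ℕ} (t h : E → W)
    (ht : ∀ w, #{e | t e = w} ≤ k) (hh : ∀ w, #{e | h e = w} ≤ k) :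
    ∃ C : E → Fin k, IsProperEdgeColoring t h C := by
  let U : Finset W := univ.image t ∪ univ.image h
  let t' : E → U := fun e => ⟨t e, by simp [U]⟩
  let h' : E → U := fun e => ⟨h e, by simp [U]⟩
  have hfiber : ∀ (f : E → W) (f' : E → U), (∀ e, (f' e : W) = f e) →
      ∀ u, #{e | f' e = u} = #{e | f e = u} := by
    intro f f' hf u
    simp_rw [Subtype.ext_iff, hf]
  obtain ⟨C, hC⟩ := exists_properEdgeColoring_of_fintype t' h'
    (fun u => (hfiber t t' (fun _ => rfl) u).trans_le (ht u))
    (fun u => (hfiber h h' (fun _ => rfl) u).trans_le (hh u))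
  exact ⟨C, fun c => ⟨fun e he e' he' hte => (hC c).1 he he' (Subtype.ext hte),
    fun e he e' he' hhe => (hC c).2 he he' (Subtype.ext hhe)⟩⟩

end BipartiteEdgeColoring

/-- `q` cuts every fiber of `pr` into blocks of at most `k` elements; `q e * k < #fiber` says that
a fiber of size `d` uses only the block indices below `⌈d / k⌉`. -/
theorem exists_fiberwise_blocks {E V : Type*} [Fintype E] [DecidableEq V] (pr : E → V) {k : ℕ}
    (hk : 0 < k) :
    ∃ q : E → ℕ, (∀ e, q e * k < #{x | pr x = pr e}) ∧ ∀ v j, #{e | pr e = v ∧ q e = j} ≤ k := by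
  let : LinearOrder E := LinearOrder.lift' _ (Fintype.equivFin E).injective
  let rank : E → ℕ := fun e => #{x | pr x = pr e ∧ x < e}
  have rank_lt : ∀ e, rank e < #{x | pr x = pr e} := fun e =>
    card_lt_card ⟨fun x hx => by simp_all, fun hsub => by simpa using hsub (by simp : e ∈ _)⟩
  have rank_lt_rank : ∀ e e', pr e = pr e' → e < e' → rank e < rank e' := by
    intro e e' hpr hlt
    refine card_lt_card ⟨fun x hx => ?_, fun hsub => ?_⟩
    · simp only [mem_filter, mem_univ, true_and] at hx ⊢
      exact ⟨hx.1.trans hpr, hx.2.trans hlt⟩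
    · simpa using hsub (by simp [hpr, hlt] : e ∈ ({x | pr x = pr e' ∧ x < e'} : Finset E))
  have rank_inj : ∀ e e', pr e = pr e' → rank e = rank e' → e = e' := by
    intro e e' hpr hr
    rcases lt_trichotomy e e' with hlt | heq | hgt
    · exact absurd hr (rank_lt_rank e e' hpr hlt).ne
    · exact heq
    · exact absurd hr (rank_lt_rank e' e hpr.symm hgt).ne'
  refine ⟨fun e => rank e / k, fun e => (Nat.div_mul_le_self _ _).trans_lt (rank_lt e),
    fun v j => ?_⟩
  calc #{e | pr e = v ∧ rank e / k = j}
      ≤ #(Ico (j * k) ((j + 1) * k)) := card_le_card_of_injOn rank (fun e he => ?_)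
        fun e he e' he' hr =>
          rank_inj e e' ((mem_filter.1 he).2.1.trans (mem_filter.1 he').2.1.symm) hr
    _ = k := by simp [add_mul]
  obtain ⟨-, rfl⟩ := (mem_filter.1 he).2
  simp only [coe_Ico, Set.mem_Ico]
  exact ⟨Nat.div_mul_le_self _ _, (Nat.div_lt_iff_lt_mul hk).1 (Nat.lt_succ_self _)⟩

theorem card_class_fiber_le_of_injOn {E V ι : Type*} [Fintype E] [DecidableEq V] [DecidableEq ι]
    {pr : E → V} {q : E → ℕ} {k : ℕ} (hq : ∀ e, q e * k < #{x | pr x = pr e}) (C : E → ι) (c : ι)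
    (hinj : Set.InjOn (fun e => (pr e, q e)) {e | C e = c}) {v : V} {a : ℕ∞}
    (hv : (#{x | pr x = v} : ℕ∞) ≤ k * a) : (#{e | C e = c ∧ pr e = v} : ℕ∞) ≤ a := by
  induction a using ENat.recTopCoe with
  | top => exact le_top
  | coe n =>
    have hv' : #{x | pr x = v} ≤ k * n := by exact_mod_cast hv
    have hle : #{e | C e = c ∧ pr e = v} ≤ n := by
      calc #{e | C e = c ∧ pr e = v} ≤ #(range n) := card_le_card_of_injOn q (fun e he => ?_)
            fun e he e' he' hqe => hinj (mem_filter.1 he).2.1 (mem_filter.1 he').2.1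
              (Prod.ext ((mem_filter.1 he).2.2.trans (mem_filter.1 he').2.2.symm) hqe)
        _ = n := card_range n
      have hlt : q e * k < k * n := (hq e).trans_le ((mem_filter.1 he).2.2 ▸ hv')
      rw [mul_comm] at hlt
      exact mem_range.2 (Nat.lt_of_mul_lt_mul_left hlt)
    exact_mod_cast hle

namespace MG

variable {V E : Type} {ends : E → Sym2 V} {g h : V → ℕ∞}

theorem ValidPair.exists_orientation (hgh : ValidPair ends g h) :
    ∃ D : E → V × V, IsOrientation ends D ∧ ∀ e, g (D e).2 ≠ 0 ∧ h (D e).1 ≠ 0 := by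
  obtain ⟨hv, hg, hh⟩ := hgh
  simp only [Order.one_le_iff_ne_zero, ne_eq, add_eq_zero, not_and] at hv hg hh
  have hedge : ∀ e, ∃ p : V × V, s(p.1, p.2) = ends e ∧ g p.2 ≠ 0 ∧ h p.1 ≠ 0 := by
    intro e
    induction hs : ends e using Sym2.ind with
    | h a b =>
      have hadj : Adj ends a b := ⟨e, hs⟩
      by_cases hab : g b ≠ 0 ∧ h a ≠ 0
      · exact ⟨(a, b), rfl, hab⟩
      · have := hv a; have := hv b; have := hg a b hadj; have := hh a b hadj
        exact ⟨(b, a), Sym2.eq_swap, by tauto, by tauto⟩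
  choose D hD using hedge
  exact ⟨D, fun e => (hD e).1, fun e => (hD e).2⟩

variable [Fintype E] [DecidableEq V]

theorem ghColoring_iff {k : ℕ} (C : E → Fin k) :
    GHColoring ends g h C ↔ ∃ D : E → V × V, IsOrientation ends D ∧ ∀ c v,
      (#{e | C e = c ∧ (D e).2 = v} : ℕ∞) ≤ g v ∧ (#{e | C e = c ∧ (D e).1 = v} : ℕ∞) ≤ h v := by
  have hdeg : ∀ (D : E → V × V) c v,
      inDeg (fun x : {e // C e = c} => D x) v = #{e | C e = c ∧ (D e).2 = v} ∧
        outDeg (fun x : {e // C e = c} => D x) v = #{e | C e = c ∧ (D e).1 = v} :=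
    fun D c v => ⟨card_filter_subtype_val (q := fun e => (D e).2 = v),
      card_filter_subtype_val (q := fun e => (D e).1 = v)⟩
  constructor
  · intro hC
    choose D hD hin hout using hC
    refine ⟨fun e => D (C e) ⟨e, rfl⟩, fun e => hD _ _, fun c v => ?_⟩
    have hDc : D c = fun x => D (C x.1) ⟨x.1, rfl⟩ := by
      funext ⟨e, he⟩
      subst he
      rfl
    rw [← (hdeg _ c v).1, ← (hdeg _ c v).2, ← hDc]
    exact ⟨hin c v, hout c v⟩
  · rintro ⟨D, hD, hcount⟩ c
    exact ⟨fun x => D x, fun x => hD x, fun v => (hdeg D c v).1 ▸ (hcount c v).1,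
      fun v => (hdeg D c v).2 ▸ (hcount c v).2⟩

theorem ValidPair.ghColoring_equivFin (hgh : ValidPair ends g h) :
    GHColoring ends g h (Fintype.equivFin E) := by
  obtain ⟨D, hD, hpos⟩ := hgh.exists_orientation
  have hclass : ∀ (pr : V × V → V) (f : V → ℕ∞), (∀ e, f (pr (D e)) ≠ 0) →
      ∀ c v, (#{e | Fintype.equivFin E e = c ∧ pr (D e) = v} : ℕ∞) ≤ f v := by
    intro pr f hf c v
    obtain hempty | ⟨e, he⟩ :=
      eq_empty_or_nonempty ({e | Fintype.equivFin E e = c ∧ pr (D e) = v} : Finset E)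
    · simp [hempty]
    · have hle : #{e | Fintype.equivFin E e = c ∧ pr (D e) = v} ≤ 1 :=
        card_le_one.2 fun x hx y hy =>
          (Fintype.equivFin E).injective ((mem_filter.1 hx).2.1.trans (mem_filter.1 hy).2.1.symm)
      calc _ ≤ (1 : ℕ∞) := by exact_mod_cast hle
        _ ≤ f v := Order.one_le_iff_ne_zero.2 ((mem_filter.1 he).2.2 ▸ hf e)
  exact (ghColoring_iff _).2 ⟨D, hD, fun c v =>
    ⟨hclass Prod.snd g (fun e => (hpos e).1) c v, hclass Prod.fst h (fun e => (hpos e).2) c v⟩⟩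

theorem GHOrientable.mono {g' h' : V → ℕ∞} (hg : g ≤ g') (hh : h ≤ h')
    (hor : GHOrientable ends g h) : GHOrientable ends g' h' :=
  let ⟨D, hD, hin, hout⟩ := hor
  ⟨D, hD, fun v => (hin v).trans (hg v), fun v => (hout v).trans (hh v)⟩

theorem GHColoring.ghOrientable_mul {m : ℕ} {C : E → Fin m} (hC : GHColoring ends g h C) :
    GHOrientable ends (fun v => m * g v) (fun v => m * h v) := by
  obtain ⟨D, hD, hcount⟩ := (ghColoring_iff C).1 hC
  have hbound : ∀ (p : E → Prop) [DecidablePred p] (f : V → ℕ∞) (v : V),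
      (∀ c, (#{e | C e = c ∧ p e} : ℕ∞) ≤ f v) → (#{e | p e} : ℕ∞) ≤ m * f v := by
    intro p _ f v hp
    rw [card_eq_sum_card_fiberwise (f := C) (t := univ) (fun _ _ => mem_univ _), Nat.cast_sum]
    simp_rw [filter_filter, and_comm (a := p _)]
    calc _ ≤ #(univ : Finset (Fin m)) • f v := sum_le_card_nsmul _ _ _ fun c _ => hp c
      _ = m * f v := by simp
  exact ⟨D, hD, fun v => hbound _ g v fun c => (hcount c v).1,
    fun v => hbound _ h v fun c => (hcount c v).2⟩

theorem GHOrientable.exists_ghColoring {k : ℕ} (hk : 0 < k)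
    (hor : GHOrientable ends (fun v => k * g v) (fun v => k * h v)) :
    ∃ C : E → Fin k, GHColoring ends g h C := by
  obtain ⟨D, hD, hin, hout⟩ := hor
  obtain ⟨qo, hqo, hqo_le⟩ := exists_fiberwise_blocks (fun e => (D e).1) hk
  obtain ⟨qi, hqi, hqi_le⟩ := exists_fiberwise_blocks (fun e => (D e).2) hk
  obtain ⟨C, hC⟩ := exists_properEdgeColoring (fun e => ((D e).1, qo e)) (fun e => ((D e).2, qi e))
    (fun w => by simpa [Prod.ext_iff] using hqo_le w.1 w.2)
    (fun w => by simpa [Prod.ext_iff] using hqi_le w.1 w.2)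
  exact ⟨C, (ghColoring_iff C).2 ⟨D, hD, fun c v =>
    ⟨card_class_fiber_le_of_injOn hqi C c (hC c).2 (hin v),
      card_class_fiber_le_of_injOn hqo C c (hC c).1 (hout v)⟩⟩⟩

theorem ghChromaticIndex_le_iff_general {V E : Type} [Fintype E] [DecidableEq V]
    (ends : E → Sym2 V) (g h : V → ℕ∞) (hgh : ValidPair ends g h) (k : ℕ) (hk : 1 ≤ k) :
    ghChromaticIndex ends g h ≤ k ↔
      GHOrientable ends (fun v => (k : ℕ∞) * g v) (fun v => (k : ℕ∞) * h v) := by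
  constructor
  · intro hle
    obtain ⟨C, hC⟩ : ∃ C : E → Fin (ghChromaticIndex ends g h), GHColoring ends g h C :=
      Nat.sInf_mem (⟨_, Fintype.equivFin E, hgh.ghColoring_equivFin⟩ :
        ∃ m, ∃ C : E → Fin m, GHColoring ends g h C)
    have hle' : (ghChromaticIndex ends g h : ℕ∞) ≤ k := by exact_mod_cast hle
    exact hC.ghOrientable_mul.mono (fun v => by gcongr) (fun v => by gcongr)
  · intro hor
    obtain ⟨C, hC⟩ := hor.exists_ghColoring hk
    exact Nat.sInf_le ⟨C, hC⟩

/-- Lemma 2.3: for every multigraph `G`, valid pair `(g,h)`, and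
integer `k ≥ 1`, `χ'_{(g,h)}(G) ≤ k` iff `G` is `(k·g, k·h)`-orientable. -/
theorem ghChromaticIndex_le_iff {V E : Type} [Fintype V] [Fintype E] [DecidableEq V]
    (ends : E → Sym2 V) (g h : V → ℕ∞) (hgh : ValidPair ends g h) (k : ℕ) (hk : 1 ≤ k) :
    ghChromaticIndex ends g h ≤ k ↔
      GHOrientable ends (fun v => (k : ℕ∞) * g v) (fun v => (k : ℕ∞) * h v) :=
  ghChromaticIndex_le_iff_general ends g h hgh k hk

end MG
end
end

section
/- For every multigraph G and every function f : V(G) → ℕ with f(v) ≥ 2 for all v, G is a degree-f pseudoforest if and only if G is (1, f−1)-orientable, i.e., G has an orientation in which every vertex has indegree at most 1 and every vertex v has outdegree at most f(v)−1. -/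
open Classical

noncomputable section

open Finset

theorem Relation.ReflTransGen.exists_boundary {α : Type*} {r : α → α → Prop} {p : α → Prop}
    {a b : α} (h : ReflTransGen r a b) (ha : p a) (hb : ¬ p b) : ∃ c d, p c ∧ ¬ p d ∧ r c d := by
  induction h with
  | refl => exact absurd ha hb
  | @tail c d _ hcd ih =>
    by_cases hc : p c
    · exact ⟨c, d, hc, hb, hcd⟩
    · exact ih hc

namespace MG

variable {V E : Type} {ends : E → Sym2 V}

instance : Std.Symm (Adj ends) where
  symm _ _ := fun ⟨e, he⟩ => ⟨e, he.trans Sym2.eq_swap⟩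

theorem Reaches.symm {u v : V} (h : Reaches ends u v) : Reaches ends v u :=
  symm_of (Relation.ReflTransGen _) h

theorem reaches_of_mem_ends {e : E} {u w : V} (hu : u ∈ ends e) (hw : w ∈ ends e) :
    Reaches ends u w := by
  rw [← Sym2.other_spec hu, Sym2.mem_iff] at hw
  rcases hw with rfl | rfl
  · exact .refl
  · exact .single ⟨e, (Sym2.other_spec hu).symm⟩

theorem exists_orientation_snd_eq {h : E → V} (hh : ∀ e, h e ∈ ends e) :
    ∃ D : E → V × V, IsOrientation ends D ∧ ∀ e, (D e).2 = h e :=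
  ⟨fun e => (Sym2.Mem.other (hh e), h e), fun e => Sym2.eq_swap.trans (Sym2.other_spec (hh e)),
    fun _ => rfl⟩

section Component

variable [Fintype V]

@[simp]
theorem mem_component {u v : V} : u ∈ component ends v ↔ Reaches ends v u := by
  simp [component]

theorem mem_component_self (v : V) : v ∈ component ends v :=
  mem_component.2 .refl

theorem component_eq_of_mem {u v : V} (h : u ∈ component ends v) :
    component ends u = component ends v := by
  ext w
  simp only [mem_component] at h ⊢
  exact ⟨h.trans, (h.symm.trans ·)⟩

theorem mem_component_of_mem_ends {e : E} {u w : V} (hu : u ∈ ends e) (hw : w ∈ ends e) :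
    w ∈ component ends u :=
  mem_component.2 (reaches_of_mem_ends hu hw)

end Component

section Mult

variable [DecidableEq V]

theorem sum_mult_of_forall_mem {S : Finset V} {s : Sym2 V} (h : ∀ v ∈ s, v ∈ S) :
    ∑ v ∈ S, mult v s = 2 := by
  induction s using Sym2.ind with
  | _ a b => simp_all [mult, sum_add_distrib]

theorem mult_eq_zero_of_notMem {v : V} {s : Sym2 V} (h : v ∉ s) : mult v s = 0 := by
  induction s using Sym2.ind with
  | _ a b => simp_all [mult, eq_comm]

end Mult

section Degree

variable [Fintype E] [DecidableEq V]

theorem degree_eq_outDeg_add_inDeg {D : E → V × V} (hD : IsOrientation ends D) (v : V) :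
    degree ends v = outDeg D v + inDeg D v := by
  unfold degree outDeg inDeg
  rw [card_filter, card_filter, ← sum_add_distrib]
  refine sum_congr rfl fun e _ => ?_
  rw [← hD e]
  rfl

end Degree

section Counting

variable [Fintype V] [Fintype E] [DecidableEq V]

variable (ends) in
/-- For a pseudoforest, `R` has one vertex in each tree component (`e(C) = #C - 1`) and none in
the unicyclic ones (`e(C) = #C`). -/
def IsRootSet (R : Finset V) : Prop :=
  ∀ z, #(R ∩ component ends z) + edgesWithin ends (component ends z) = #(component ends z)

theorem edgesWithin_empty : edgesWithin ends ∅ = 0 := by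
  simpa [edgesWithin] using fun e => ⟨_, Sym2.out_fst_mem (ends e)⟩

theorem edgesWithin_lt_edgesWithin_insert {W : Finset V} {e : E} {c d : V}
    (he : ends e = s(c, d)) (hc : c ∈ W) (hd : d ∉ W) :
    edgesWithin ends W < edgesWithin ends (insert d W) := by
  refine card_lt_card ((ssubset_iff_of_subset ?_).2 ⟨e, ?_, ?_⟩)
  · exact monotone_filter_right _ fun _ _ he v hv => mem_insert_of_mem (he v hv)
  · simp [he, hc]
  · simp [he, hd]

theorem card_component_add_edgesWithin_le {z : V} {W : Finset V} (hz : z ∈ W)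
    (hW : W ⊆ component ends z) :
    #(component ends z) + edgesWithin ends W ≤ #W + edgesWithin ends (component ends z) := by
  obtain ⟨n, hn⟩ : ∃ n, #(component ends z) - #W = n := ⟨_, rfl⟩
  induction n generalizing W with
  | zero =>
    rw [eq_of_subset_of_card_le hW (by omega)]
  | succ n ih =>
    obtain ⟨y, hyC, hyW⟩ := not_subset.1 fun h => by
      rw [Finset.Subset.antisymm hW h] at hn; omega
    obtain ⟨c, d, hc, hd, e, he⟩ := (mem_component.1 hyC).exists_boundary (p := (· ∈ W)) hz hyW
    have hdC : d ∈ component ends z := mem_component.2 ((mem_component.1 (hW hc)).tail ⟨e, he⟩)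
    have hgrow := edgesWithin_lt_edgesWithin_insert he hc hd
    have := ih (mem_insert_of_mem hz) (insert_subset hdC hW)
      (by rw [card_insert_of_notMem hd]; omega)
    rw [card_insert_of_notMem hd] at this
    omega

theorem card_component_le_edgesWithin_add_one (z : V) :
    #(component ends z) ≤ edgesWithin ends (component ends z) + 1 := by
  have := card_component_add_edgesWithin_le (mem_singleton_self z)
    (singleton_subset_iff.2 (mem_component_self (ends := ends) z))
  rw [card_singleton] at this
  omega

theorem sum_degree_component (z : V) :
    ∑ v ∈ component ends z, degree ends v = 2 * edgesWithin ends (component ends z) := by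
  unfold degree edgesWithin
  rw [sum_comm, ← sum_filter_add_sum_filter_not univ fun e => ∀ v ∈ ends e, v ∈ component ends z]
  rw [sum_congr rfl fun e he => sum_mult_of_forall_mem (mem_filter.1 he).2, sum_const,
    smul_eq_mul, mul_comm]
  refine (add_eq_left.2 (sum_eq_zero fun e he => sum_eq_zero fun v hv => ?_))
  refine mult_eq_zero_of_notMem fun hve => (mem_filter.1 he).2 fun u hu => ?_
  rw [← component_eq_of_mem hv]
  exact mem_component_of_mem_ends hve hu

theorem exists_degree_le_one_of_edgesWithin_lt {z : V}
    (h : edgesWithin ends (component ends z) < #(component ends z)) :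
    ∃ v ∈ component ends z, degree ends v ≤ 1 := by
  by_contra! hdeg
  have := sum_le_sum fun v hv => Nat.succ_le_of_lt (hdeg v hv)
  rw [sum_degree_component, sum_const, smul_eq_mul] at this
  omega

theorem edgesWithin_le_add_edgesWithin_compl (W : Finset V) (z : V) :
    edgesWithin ends W ≤ edgesWithin ends (W.filter (· ∈ component ends z)) +
      edgesWithin ends (W.filter (· ∉ component ends z)) := by
  refine (card_le_card fun e he => ?_).trans (card_union_le _ _)
  simp only [mem_filter, mem_union, mem_univ, true_and] at he ⊢
  by_cases hin : ∀ v ∈ ends e, v ∈ component ends z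
  · exact .inl fun v hv => ⟨he v hv, hin v hv⟩
  · obtain ⟨u, hu, huz⟩ : ∃ u ∈ ends e, u ∉ component ends z := by simpa using hin
    refine .inr fun v hv => ⟨he v hv, fun hvz => huz ?_⟩
    rw [← component_eq_of_mem hvz]
    exact mem_component_of_mem_ends hv hu

theorem edgesWithin_le_card_sdiff {R : Finset V}
    (hR : ∀ z, #(R ∩ component ends z) + edgesWithin ends (component ends z) ≤
      #(component ends z)) (W : Finset V) :
    edgesWithin ends W ≤ #(W \ R) := by
  induction W using Finset.strongInduction with
  | H W ih =>
  obtain rfl | ⟨w, hw⟩ := W.eq_empty_or_nonempty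
  · simp [edgesWithin_empty]
  have hin : edgesWithin ends (W.filter (· ∈ component ends w)) ≤
      #(W.filter (· ∈ component ends w) \ R) := by
    have hgrow := card_component_add_edgesWithin_le (ends := ends)
      (W := W.filter (· ∈ component ends w)) (mem_filter.2 ⟨hw, mem_component_self w⟩)
      fun v hv => (mem_filter.1 hv).2
    have hRC : #(R ∩ W.filter (· ∈ component ends w)) ≤ #(R ∩ component ends w) :=
      card_le_card (inter_subset_inter_left fun v hv => (mem_filter.1 hv).2)
    have := hR w
    rw [card_sdiff]
    omega
  have hout := ih (W.filter (· ∉ component ends w))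
    (filter_ssubset.2 ⟨w, hw, not_not.2 (mem_component_self w)⟩)
  have hsplit : #(W.filter (· ∈ component ends w) \ R) +
      #(W.filter (· ∉ component ends w) \ R) = #(W \ R) := by
    rw [← card_filter_add_card_filter_not (s := W \ R) (· ∈ component ends w)]
    congr 2 <;> ext v <;> simp [and_right_comm]
  have := edgesWithin_le_add_edgesWithin_compl (ends := ends) W w
  omega

theorem exists_injective_head_notMem {R : Finset V}
    (hR : ∀ z, #(R ∩ component ends z) + edgesWithin ends (component ends z) ≤
      #(component ends z)) :
    ∃ h : E → V, Function.Injective h ∧ ∀ e, h e ∈ ends e ∧ h e ∉ R := by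
  have hall (A : Finset E) :
      #A ≤ #(A.biUnion fun e => univ.filter fun v => v ∈ ends e ∧ v ∉ R) := by
    let W := A.biUnion fun e => univ.filter (· ∈ ends e)
    calc #A ≤ edgesWithin ends W := card_le_card fun e he =>
          mem_filter.2 ⟨mem_univ e, fun v hv => by simpa [W] using ⟨e, he, hv⟩⟩
      _ ≤ #(W \ R) := edgesWithin_le_card_sdiff hR W
      _ ≤ _ := card_le_card fun v hv => by
          obtain ⟨⟨e, he, hve⟩, hvR⟩ : (∃ e ∈ A, v ∈ ends e) ∧ v ∉ R := by simpa [W] using hv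
          simpa using ⟨e, he, hve, hvR⟩
  obtain ⟨h, hinj, hh⟩ := (all_card_le_biUnion_card_iff_exists_injective _).1 hall
  exact ⟨h, hinj, fun e => by simpa using hh e⟩

theorem exists_head_eq_of_notMem {R : Finset V}
    (hR : IsRootSet ends R)
    {h : E → V} (hinj : Function.Injective h) (hh : ∀ e, h e ∈ ends e ∧ h e ∉ R)
    {v : V} (hv : v ∉ R) : ∃ e, h e = v := by
  let F := univ.filter fun e => ∀ u ∈ ends e, u ∈ component ends v
  have hsub : F.image h ⊆ component ends v \ R := by
    simp only [subset_iff, mem_image, mem_filter, F]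
    rintro _ ⟨e, ⟨-, he⟩, rfl⟩
    exact mem_sdiff.2 ⟨he _ (hh e).1, (hh e).2⟩
  have hcard : #(component ends v \ R) ≤ #(F.image h) := by
    have := hR v
    have hF : edgesWithin ends (component ends v) = #F := rfl
    rw [card_image_of_injective _ hinj, card_sdiff]
    omega
  obtain ⟨e, -, he⟩ := mem_image.1 <| (eq_of_subset_of_card_le hsub hcard).symm ▸
    mem_sdiff.2 ⟨mem_component_self v, hv⟩
  exact ⟨e, he⟩

theorem exists_orientation_inDeg_eq {R : Finset V}
    (hR : IsRootSet ends R) :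
    ∃ D : E → V × V, IsOrientation ends D ∧ ∀ v, inDeg D v = if v ∈ R then 0 else 1 := by
  obtain ⟨h, hinj, hh⟩ := exists_injective_head_notMem fun z => (hR z).le
  obtain ⟨D, hD, hDh⟩ := exists_orientation_snd_eq fun e => (hh e).1
  refine ⟨D, hD, fun v => ?_⟩
  unfold inDeg
  simp only [hDh]
  split_ifs with hv
  · exact card_eq_zero.2 (filter_eq_empty_iff.2 fun e _ he => (hh e).2 (he ▸ hv))
  · obtain ⟨e, rfl⟩ := exists_head_eq_of_notMem hR hinj hh hv
    exact card_eq_one.2 ⟨e, by ext; simp [hinj.eq_iff]⟩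

theorem exists_isRootSet (hpf : IsPseudoforest ends) :
    ∃ R : Finset V, IsRootSet ends R ∧ ∀ v ∈ R, degree ends v ≤ 1 := by
  have hroot (C : Finset V) : ∃ S ⊆ C, (∀ v ∈ S, degree ends v ≤ 1) ∧
      ∀ z, C = component ends z → #S + edgesWithin ends C = #C := by
    by_cases htree : ∃ z, C = component ends z ∧ edgesWithin ends C < #C
    · obtain ⟨z, rfl, hlt⟩ := htree
      obtain ⟨r, hr, hdeg⟩ := exists_degree_le_one_of_edgesWithin_lt hlt
      refine ⟨{r}, singleton_subset_iff.2 hr, by simpa using hdeg, fun _ _ => ?_⟩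
      have := card_component_le_edgesWithin_add_one (ends := ends) z
      rw [card_singleton]
      omega
    · refine ⟨∅, empty_subset _, by simp, fun z hz => ?_⟩
      have hnot : ¬ edgesWithin ends C < #C := fun h => htree ⟨z, hz, h⟩
      have := hpf z
      subst hz
      simp only [card_empty, zero_add]
      omega
  choose S hSC hSdeg hS using hroot
  refine ⟨univ.filter fun v => v ∈ S (component ends v), fun z => ?_,
    fun v hv => hSdeg _ v (mem_filter.1 hv).2⟩
  have hRz : univ.filter (fun v => v ∈ S (component ends v)) ∩ component ends z =
      S (component ends z) := by
    ext v
    simp only [mem_inter, mem_filter, mem_univ, true_and]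
    constructor
    · rintro ⟨hv, hvz⟩
      rwa [component_eq_of_mem hvz] at hv
    · intro hv
      have hvz := hSC _ hv
      exact ⟨by rwa [component_eq_of_mem hvz], hvz⟩
  rw [hRz]
  exact hS _ z rfl

theorem edgesWithin_le_card_of_inDeg_le_one {D : E → V × V} (hD : IsOrientation ends D)
    (hin : ∀ v, inDeg D v ≤ 1) (S : Finset V) : edgesWithin ends S ≤ #S := by
  refine card_le_card_of_injOn (fun e => (D e).2) (fun e he => ?_) fun e₁ _ e₂ _ h => ?_
  · exact (mem_filter.1 he).2 _ (hD e ▸ Sym2.mem_mk_right _ _)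
  · exact card_le_one.1 (hin (D e₂).2) e₁ (by simpa [inDeg] using h) e₂ (by simp)

end Counting

/-- Observation 3.1: for `f` with `f(v) ≥ 2` everywhere, `G` is a
degree-`f` pseudoforest iff `G` is `(1, f-1)`-orientable. -/
theorem degF_pseudoforest_iff_orientable {V E : Type} [Fintype V] [Fintype E] [DecidableEq V]
    (ends : E → Sym2 V) (f : V → ℕ) (hf : ∀ v, 2 ≤ f v) :
    (IsPseudoforest ends ∧ ∀ v, degree ends v ≤ f v) ↔
      GHOrientable ends (fun _ => 1) (fun v => ((f v - 1 : ℕ) : ℕ∞)) := by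
  simp only [GHOrientable, Nat.cast_le_one, Nat.cast_le]
  constructor
  · rintro ⟨hpf, hdeg⟩
    obtain ⟨R, hR, hRdeg⟩ := exists_isRootSet hpf
    obtain ⟨D, hD, hin⟩ := exists_orientation_inDeg_eq hR
    refine ⟨D, hD, fun v => by rw [hin]; split_ifs <;> simp, fun v => ?_⟩
    have hsum := degree_eq_outDeg_add_inDeg hD v
    by_cases hv : v ∈ R
    · have := hRdeg v hv
      have := hf v
      omega
    · rw [hin, if_neg hv] at hsum
      have := hdeg v
      omega
  · rintro ⟨D, hD, hin, hout⟩
    refine ⟨fun z => edgesWithin_le_card_of_inDeg_le_one hD hin _, fun v => ?_⟩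
    have := degree_eq_outDeg_add_inDeg hD v
    have := hin v
    have := hout v
    have := hf v
    omega

end MG
end
end

section
/- For every multigraph G and every valid pair of functions (g,h), the list coloring analogue of the (g,h)-oriented chromatic index equals the (g,h)-oriented chromatic index: χ'_{(g,h),ℓ}(G) = χ'_{(g,h)}(G). -/
/-!
Fix a `(g,h)`-oriented `k`-colouring and glue the orientations of its colour classes into one
orientation `D` of `G`. Key each edge by its head together with its rank among the edges of its
colour entering that head, and by its tail together with the analogous rank. The two keys turn
the edges into a bipartite multigraph that the given colouring colours properly, so by Galvin's
theorem it can be coloured properly from any lists of size `k`. In such a colouring the edges of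
one colour entering `v` have distinct ranks, all below `g v`, and those leaving `v` distinct ranks
below `h v`, so `D` orients every new colour class as required. Conversely, the lists
`{0, …, k - 1}` turn a list colouring into a `k`-colouring.
-/

open Classical

noncomputable section

open Finset Function

namespace Galvin

variable {α β γ ι κ : Type*} (kX : α → β) (kY : α → γ) (φ : α → ι)

/-- Galvin's orientation of the line graph of the bipartite multigraph whose edge `e` joins
`kX e` to `kY e`, for a proper edge colouring `φ` of that multigraph. -/
def Arc [LinearOrder ι] (e f : α) : Prop :=
  (kX e = kX f ∧ φ e < φ f) ∨ (kY e = kY f ∧ φ f < φ e)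

def IsKernel [LinearOrder ι] (F M : Finset α) : Prop :=
  M ⊆ F ∧ Set.InjOn kX M ∧ Set.InjOn kY M ∧ ∀ e ∈ F, e ∉ M → ∃ m ∈ M, Arc kX kY φ e m

variable {kX kY φ} [LinearOrder ι]

theorem exists_isKernel (hX : Injective fun e => (kX e, φ e))
    (hY : Injective fun e => (kY e, φ e)) (F : Finset α) : ∃ M, IsKernel kX kY φ F M := by
  induction F using Finset.strongInduction with
  | H F ih =>
  set P := F.filter fun e => ∀ f ∈ F, kX f = kX e → φ f ≤ φ e with hP
  -- The `kX`-maximal elements `P` absorb the rest of `F`. If two of them share their `kY`-end,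
  -- drop the one `r` of larger colour: as the other is `kX`-maximal, whatever absorbs it does so
  -- through its `kY`-end, and then absorbs `r` too.
  by_cases hR : ∃ r ∈ P, ∃ e ∈ P, kY r = kY e ∧ φ e < φ r
  · obtain ⟨r, hrP, e, heP, hre, hφ⟩ := hR
    have hrF : r ∈ F := (mem_filter.1 hrP).1
    obtain ⟨M, hMF, hMX, hMY, hMabs⟩ := ih (F.erase r) (erase_ssubset hrF)
    refine ⟨M, hMF.trans (erase_subset _ _), hMX, hMY, fun x hxF hxM => ?_⟩
    obtain rfl | hxr := eq_or_ne x r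
    · by_cases heM : e ∈ M
      · exact ⟨e, heM, Or.inr ⟨hre, hφ⟩⟩
      obtain ⟨heF, hemax⟩ := mem_filter.1 heP
      obtain ⟨m, hmM, hem⟩ := hMabs e (mem_erase.2 ⟨ne_of_apply_ne φ hφ.ne, heF⟩) heM
      rcases hem with ⟨hXm, hφm⟩ | ⟨hYm, hφm⟩
      · exact absurd hφm (hemax m (mem_of_mem_erase (hMF hmM)) hXm.symm).not_gt
      · exact ⟨m, hmM, Or.inr ⟨hre.trans hYm, hφm.trans hφ⟩⟩
    · exact hMabs x (mem_erase.2 ⟨hxr, hxF⟩) hxM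
  · push Not at hR
    refine ⟨P, filter_subset _ _, ?_, ?_, ?_⟩
    · intro e he f hf hef
      simp only [hP, mem_coe, mem_filter] at he hf
      exact hX (Prod.ext hef (le_antisymm (hf.2 e he.1 hef) (he.2 f hf.1 hef.symm)))
    · intro e he f hf hef
      rcases lt_trichotomy (φ e) (φ f) with hlt | heq | hgt
      · exact absurd hlt (hR f hf e he hef.symm).not_gt
      · exact hY (Prod.ext hef heq)
      · exact absurd hgt (hR e he f hf hef).not_gt
    · intro e heF heP
      obtain ⟨f, hfF, hfe, hφ⟩ : ∃ f ∈ F, kX f = kX e ∧ φ e < φ f := by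
        simpa [hP, heF] using heP
      obtain ⟨m, hm, hmax⟩ := exists_max_image (F.filter (kX · = kX e)) φ ⟨f, by simp [hfF, hfe]⟩
      rw [mem_filter] at hm
      refine ⟨m, mem_filter.2 ⟨hm.1, fun x hxF hx => hmax x (by simp [hxF, hx, hm.2])⟩,
        Or.inl ⟨hm.2.symm, hφ.trans_le (hmax f (by simp [hfF, hfe]))⟩⟩

theorem injOn_ite {k : α → β} {F M : Finset α} {c : κ} {C : α → κ} (hM : Set.InjOn k M)
    (hC : Set.InjOn (fun e => (k e, C e)) ↑(F \ M)) (hc : ∀ e ∈ F \ M, C e ≠ c) :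
    Set.InjOn (fun e => (k e, if e ∈ M then c else C e)) F := by
  intro e he f hf hef
  simp only [Prod.mk.injEq] at hef
  by_cases heM : e ∈ M <;> by_cases hfM : f ∈ M <;> simp only [heM, hfM, if_true, if_false] at hef
  · exact hM heM hfM hef.1
  · exact absurd hef.2.symm (hc f (mem_sdiff.2 ⟨hf, hfM⟩))
  · exact absurd hef.2 (hc e (mem_sdiff.2 ⟨he, heM⟩))
  · exact hC (mem_sdiff.2 ⟨he, heM⟩) (mem_sdiff.2 ⟨hf, hfM⟩) (Prod.ext hef.1 hef.2)

theorem exists_listColoring [Nonempty κ] (hX : Injective fun e => (kX e, φ e))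
    (hY : Injective fun e => (kY e, φ e)) (F : Finset α) (L : α → Finset κ)
    (hL : ∀ e ∈ F, #{f ∈ F | Arc kX kY φ e f} < #(L e)) :
    ∃ C : α → κ, (∀ e ∈ F, C e ∈ L e) ∧
      Set.InjOn (fun e => (kX e, C e)) F ∧ Set.InjOn (fun e => (kY e, C e)) F := by
  induction F using Finset.strongInduction generalizing L with
  | H F ih =>
  obtain rfl | ⟨e₀, he₀⟩ := F.eq_empty_or_nonempty
  · exact ⟨fun _ => Classical.arbitrary κ, by simp, by simp, by simp⟩
  obtain ⟨c, hc⟩ : (L e₀).Nonempty := card_pos.1 ((Nat.zero_le _).trans_lt (hL e₀ he₀))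
  -- Colour a kernel of the edges whose list contains `c` with `c`; every other such edge loses
  -- `c` from its list but also an out-neighbour in the kernel.
  obtain ⟨M, hMF, hMX, hMY, hMabs⟩ := exists_isKernel hX hY (F.filter (c ∈ L ·))
  have hMne : M.Nonempty := by
    by_contra hM
    obtain ⟨m, hm, -⟩ := hMabs e₀ (mem_filter.2 ⟨he₀, hc⟩) (by simp_all)
    exact hM ⟨m, hm⟩
  have hL' : ∀ e ∈ F \ M, #{f ∈ F \ M | Arc kX kY φ e f} < #((L e).erase c) := by
    intro e he
    obtain ⟨heF, heM⟩ := mem_sdiff.1 he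
    have hsub : {f ∈ F \ M | Arc kX kY φ e f} ⊆ {f ∈ F | Arc kX kY φ e f} :=
      filter_subset_filter _ sdiff_subset
    by_cases hce : c ∈ L e
    · obtain ⟨m, hmM, hem⟩ := hMabs e (mem_filter.2 ⟨heF, hce⟩) heM
      have hm : m ∈ {f ∈ F | Arc kX kY φ e f} := mem_filter.2 ⟨(mem_filter.1 (hMF hmM)).1, hem⟩
      have hss : {f ∈ F \ M | Arc kX kY φ e f} ⊂ {f ∈ F | Arc kX kY φ e f} :=
        (ssubset_iff_of_subset hsub).2 ⟨m, hm, by simp [hmM]⟩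
      have := card_lt_card hss
      have := hL e heF
      rw [card_erase_of_mem hce]
      omega
    · rw [erase_eq_of_notMem hce]
      exact (card_le_card hsub).trans_lt (hL e heF)
  obtain ⟨C, hCL, hCX, hCY⟩ := ih (F \ M) (sdiff_ssubset (hMF.trans (filter_subset _ _)) hMne)
    (fun e => (L e).erase c) hL'
  have hCc : ∀ e ∈ F \ M, C e ≠ c := fun e he => ne_of_mem_erase (hCL e he)
  refine ⟨fun e => if e ∈ M then c else C e, fun e he => ?_, injOn_ite hMX hCX hCc,
    injOn_ite hMY hCY hCc⟩
  by_cases heM : e ∈ M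
  · simpa [heM] using (mem_filter.1 (hMF heM)).2
  · simpa [heM] using mem_of_mem_erase (hCL e (mem_sdiff.2 ⟨he, heM⟩))

theorem card_arc_lt [Fintype α] {k : ℕ} {φ : α → Fin k} (hX : Injective fun e => (kX e, φ e))
    (hY : Injective fun e => (kY e, φ e)) (e : α) : #{f | Arc kX kY φ e f} < k := by
  -- `φ` is injective on the out-neighbours of `e` and misses `φ e`: those sharing `kX e` have
  -- larger colours, those sharing `kY e` smaller ones.
  set out : Finset α := {f | Arc kX kY φ e f}
  have hmaps : Set.MapsTo φ out (univ.erase (φ e)) := by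
    intro f hf
    replace hf : Arc kX kY φ e f := by simpa [out] using hf
    simp only [coe_erase, coe_univ, Set.mem_sdiff, Set.mem_univ, Set.mem_singleton_iff, true_and]
    rcases hf with ⟨-, h⟩ | ⟨-, h⟩ <;> [exact h.ne'; exact h.ne]
  have hinj : Set.InjOn φ out := by
    intro a ha b hb hab
    replace ha : Arc kX kY φ e a := by simpa [out] using ha
    replace hb : Arc kX kY φ e b := by simpa [out] using hb
    rcases ha with ⟨ha, hφa⟩ | ⟨ha, hφa⟩ <;> rcases hb with ⟨hb, hφb⟩ | ⟨hb, hφb⟩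
    · exact hX (Prod.ext (ha.symm.trans hb) hab)
    · exact absurd (hφb.trans hφa) (hab ▸ lt_irrefl _)
    · exact absurd (hφa.trans hφb) (hab ▸ lt_irrefl _)
    · exact hY (Prod.ext (ha.symm.trans hb) hab)
  calc #out ≤ #(univ.erase (φ e)) := card_le_card_of_injOn φ hmaps hinj
    _ < k := by
      have := (φ e).pos
      rw [card_erase_of_mem (mem_univ _), card_univ, Fintype.card_fin]
      omega

/-- Galvin's theorem: a `k`-edge-colourable bipartite multigraph is `k`-edge-choosable. -/
theorem exists_listColoring_of_coloring [Fintype α] [Nonempty κ] {k : ℕ} (φ : α → Fin k)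
    (hX : Injective fun e => (kX e, φ e)) (hY : Injective fun e => (kY e, φ e))
    (L : α → Finset κ) (hL : ∀ e, k ≤ #(L e)) :
    ∃ C : α → κ, (∀ e, C e ∈ L e) ∧
      Injective (fun e => (kX e, C e)) ∧ Injective (fun e => (kY e, C e)) := by
  obtain ⟨C, hCL, hCX, hCY⟩ :=
    exists_listColoring hX hY univ L fun e _ => (card_arc_lt hX hY e).trans_le (hL e)
  exact ⟨C, fun e => hCL e (mem_univ e), Set.injOn_univ.1 (by simpa using hCX),
    Set.injOn_univ.1 (by simpa using hCY)⟩

end Galvin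

theorem exists_fiberwise_rank {α ι : Type*} [Fintype α] [DecidableEq ι] (key : α → ι) :
    ∃ ρ : α → ℕ, Injective (fun e => (key e, ρ e)) ∧ ∀ e, ρ e < #{x | key x = key e} := by
  let _ : LinearOrder α := LinearOrder.lift' _ (Fintype.equivFin α).injective
  have hmono : ∀ {e f}, key e = key f → e < f →
      #{x | key x = key e ∧ x < e} < #{x | key x = key f ∧ x < f} := fun {e f} hk hlt =>
    card_lt_card <| (ssubset_iff_of_subset fun x hx => by
      simp only [mem_filter, mem_univ, true_and] at hx ⊢
      exact ⟨hx.1.trans hk, hx.2.trans hlt⟩).2 ⟨e, by simp [hk, hlt], by simp⟩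
  refine ⟨fun e => #{x | key x = key e ∧ x < e}, fun e f hef => ?_, fun e => card_lt_card ?_⟩
  · simp only [Prod.mk.injEq] at hef
    rcases lt_trichotomy e f with hlt | heq | hgt
    · exact absurd hef.2 (hmono hef.1 hlt).ne
    · exact heq
    · exact absurd hef.2 (hmono hef.1.symm hgt).ne'
  · exact (ssubset_iff_of_subset fun x => by simp +contextual).2 ⟨e, by simp, by simp⟩

theorem cast_card_le_of_injOn_lt {α : Type*} {s : Finset α} {ρ : α → ℕ} {b : ℕ∞}
    (hinj : Set.InjOn ρ s) (hlt : ∀ a ∈ s, (ρ a : ℕ∞) < b) : (#s : ℕ∞) ≤ b := by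
  induction b using ENat.recTopCoe with
  | top => exact le_top
  | coe n =>
    exact_mod_cast (card_le_card_of_injOn ρ (fun a ha => by simpa using hlt a ha) hinj).trans
      (card_range n).le

namespace MG

section Orientation

variable {V E : Type} [Fintype E] [DecidableEq V] (ends : E → Sym2 V) (g h : V → ℕ∞)

theorem card_filter_subtype (P q : E → Prop) [DecidablePred P] [DecidablePred q]
    [Fintype {e // P e}] :
    #{y : {e // P e} | q y} = #{e | P e ∧ q e} := by
  rw [← Fintype.card_subtype, ← Fintype.card_subtype]
  exact Fintype.card_congr (Equiv.subtypeSubtypeEquivSubtypeInter P q)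

theorem ghOrientable_subEnds_iff (P : E → Prop) [DecidablePred P] [Fintype {e // P e}] :
    GHOrientable (subEnds ends P) g h ↔ ∃ D : E → V × V, IsOrientation ends D ∧
      ∀ v, (#{e | P e ∧ (D e).2 = v} : ℕ∞) ≤ g v ∧ (#{e | P e ∧ (D e).1 = v} : ℕ∞) ≤ h v := by
  constructor
  · rintro ⟨D, hD, hin, hout⟩
    choose o ho using fun e => Sym2.mk_surjective (ends e)
    let D' : E → V × V := fun e => if he : P e then D ⟨e, he⟩ else o e
    have hD' : ∀ y : {e // P e}, D' y = D y := fun y => dif_pos y.2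
    refine ⟨D', fun e => ?_, fun v => ⟨?_, ?_⟩⟩
    · by_cases he : P e
      · simpa [D', he, subEnds] using hD ⟨e, he⟩
      · simpa [D', he, Function.uncurry] using ho e
    · simpa [← card_filter_subtype, inDeg, hD'] using hin v
    · simpa [← card_filter_subtype, outDeg, hD'] using hout v
  · rintro ⟨D, hD, hdeg⟩
    refine ⟨fun y => D y, fun y => hD y, fun v => ?_, fun v => ?_⟩
    · simpa [inDeg, ← card_filter_subtype] using (hdeg v).1
    · simpa [outDeg, ← card_filter_subtype] using (hdeg v).2

theorem exists_orientation_of_coloring {ι : Type*} [DecidableEq ι] (C₀ : E → ι)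
    (hC₀ : ∀ c, GHOrientable (subEnds ends fun e => C₀ e = c) g h) :
    ∃ D : E → V × V, IsOrientation ends D ∧ ∀ c v,
      (#{e | C₀ e = c ∧ (D e).2 = v} : ℕ∞) ≤ g v ∧ (#{e | C₀ e = c ∧ (D e).1 = v} : ℕ∞) ≤ h v := by
  choose D hD hdeg using fun c => (ghOrientable_subEnds_iff ends g h _).1 (hC₀ c)
  refine ⟨fun e => D (C₀ e) e, fun e => hD _ e, fun c v => ?_⟩
  convert hdeg c v using 4 <;>
    exact filter_congr fun e _ => by constructor <;> rintro ⟨rfl, hv⟩ <;> exact ⟨rfl, hv⟩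

theorem cast_card_filter_le_of_rank {ι κ : Type*} [DecidableEq ι] [DecidableEq κ]
    {head : E → V} {C₀ : E → ι} {ρ : E → ℕ} {C : E → κ} {b : V → ℕ∞} (hb : ∀ c v, (#{e | C₀ e = c ∧ head e = v} : ℕ∞) ≤ b v)
    (hρ : ∀ e, ρ e < #{x | (head x, C₀ x) = (head e, C₀ e)})
    (hC : Injective fun e => ((head e, ρ e), C e)) (c : κ) (v : V) :
    (#{e | C e = c ∧ head e = v} : ℕ∞) ≤ b v := by
  refine cast_card_le_of_injOn_lt (ρ := ρ) (fun e he f hf hef => hC ?_) fun e he => ?_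
  · simp only [mem_coe, mem_filter, mem_univ, true_and] at he hf
    simp only [he.1, he.2, hf.1, hf.2, hef]
  · simp only [mem_filter, mem_univ, true_and] at he
    calc (ρ e : ℕ∞) < #{x | (head x, C₀ x) = (head e, C₀ e)} := by exact_mod_cast hρ e
      _ = #{x | C₀ x = C₀ e ∧ head x = v} := by
        congr 2; ext x; simp [he.2, and_comm]
      _ ≤ b v := hb _ _

theorem exists_listColoring_of_ghColoring {k : ℕ} {C₀ : E → Fin k} (hC₀ : GHColoring ends g h C₀)
    (L : E → Finset ℕ) (hL : ∀ e, k ≤ #(L e)) :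
    ∃ C : E → ℕ, (∀ e, C e ∈ L e) ∧ ∀ c, GHOrientable (subEnds ends fun e => C e = c) g h := by
  obtain ⟨D, hD, hdeg⟩ := exists_orientation_of_coloring ends g h C₀ hC₀
  obtain ⟨ρin, hρin, hρin_lt⟩ := exists_fiberwise_rank fun e => ((D e).2, C₀ e)
  obtain ⟨ρout, hρout, hρout_lt⟩ := exists_fiberwise_rank fun e => ((D e).1, C₀ e)
  have hXin : Injective fun e => (((D e).2, ρin e), C₀ e) := fun e f hef =>
    hρin (by simp only [Prod.mk.injEq] at hef ⊢; tauto)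
  have hYout : Injective fun e => (((D e).1, ρout e), C₀ e) := fun e f hef =>
    hρout (by simp only [Prod.mk.injEq] at hef ⊢; tauto)
  obtain ⟨C, hCL, hCin, hCout⟩ := Galvin.exists_listColoring_of_coloring C₀ hXin hYout L hL
  refine ⟨C, hCL, fun c => (ghOrientable_subEnds_iff ends g h _).2 ⟨D, hD, fun v => ⟨?_, ?_⟩⟩⟩
  · exact cast_card_filter_le_of_rank (fun c v => (hdeg c v).1) hρin_lt hCin c v
  · exact cast_card_filter_le_of_rank (fun c v => (hdeg c v).2) hρout_lt hCout c v

theorem exists_ghColoring_of_listColoring {k : ℕ}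
    (hk : ∀ L : E → Finset ℕ, (∀ e, k ≤ #(L e)) → ∃ C : E → ℕ, (∀ e, C e ∈ L e) ∧
      ∀ c, GHOrientable (subEnds ends fun e => C e = c) g h) :
    ∃ C : E → Fin k, GHColoring ends g h C := by
  obtain ⟨C, hCL, hC⟩ := hk (fun _ => range k) (by simp)
  refine ⟨fun e => ⟨C e, mem_range.1 (hCL e)⟩, fun c => ?_⟩
  obtain ⟨D, hD, hdeg⟩ := (ghOrientable_subEnds_iff ends g h _).1 (hC c)
  refine (ghOrientable_subEnds_iff ends g h _).2 ⟨D, hD, fun v => ?_⟩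
  convert hdeg v using 5 <;> simp [Fin.ext_iff]

end Orientation

theorem ghListChromaticIndex_eq_general {V E : Type} [Fintype E] [DecidableEq V]
    (ends : E → Sym2 V) (g h : V → ℕ∞) :
    ghListChromaticIndex ends g h = ghChromaticIndex ends g h := by
  unfold ghListChromaticIndex ghChromaticIndex
  congr 1
  ext k
  exact ⟨exists_ghColoring_of_listColoring ends g h,
    fun ⟨_, hC₀⟩ L hL => exists_listColoring_of_ghColoring ends g h hC₀ L hL⟩

/-- Theorem 5.3: for every multigraph `G` and valid pair `(g,h)`,
`χ'_{(g,h),ℓ}(G) = χ'_{(g,h)}(G)`. -/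
theorem ghListChromaticIndex_eq {V E : Type} [Fintype V] [Fintype E] [DecidableEq V]
    (ends : E → Sym2 V) (g h : V → ℕ∞) (hgh : ValidPair ends g h) :
    ghListChromaticIndex ends g h = ghChromaticIndex ends g h :=
  ghListChromaticIndex_eq_general ends g h

end MG
end
end
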